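/- Under the assumptions of the previous setup, if z ∈ ℝ^N satisfies ⟨B_k z, z⟩ = 0 for all k = 1,...,N (equivalently Σ_i z_i b_i/(γ_k − λ_i) = 0 for all k), then z = 0. -/

import Mathlib

/-!
Writing `w i = b i * z i`, the `k`-th quadratic form is `(∑ i, w i / (γ_k - λ_i))²`, so the
hypothesis says that the Cauchy matrix `(1 / (γ_k - λ_i))` annihilates `w`. The Cauchy matrix is
nonsingular: by the barycentric formula, `∑ i, w i / (x - λ_i)` is `∏ j (x - λ_j)⁻¹` times a
polynomial of degree `< N` that takes the values `w i * ∏_{j ≠ i} (λ_i - λ_j)` at the nodes `λ_i`.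
That polynomial has the `N` roots `γ_k`, so it vanishes, and so does `w`.
-/

open Matrix Polynomial Lagrange Finset

section RankOne

variable {n R : Type*} [Fintype n] [CommRing R]

theorem diagonal_mul_vecMulVec_mul_diagonal [DecidableEq n] (d u v : n → R) :
    diagonal d * vecMulVec u v * diagonal d = vecMulVec (d * u) (v * d) := by
  ext i j
  simp only [mul_diagonal, diagonal_mul, vecMulVec_apply, Pi.mul_apply]
  ring

theorem vecMulVec_mulVec_dotProduct (u v w : n → R) :
    vecMulVec u v *ᵥ w ⬝ᵥ w = (u ⬝ᵥ w) * (v ⬝ᵥ w) := by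
  rw [vecMulVec_mulVec, op_smul_eq_smul, smul_dotProduct, smul_eq_mul, mul_comm]

end RankOne

section Cauchy

variable {ι K : Type*} [Fintype ι] [Field K]

def cauchyMatrix (x y : ι → K) : Matrix ι ι K :=
  of fun k i => (y k - x i)⁻¹

theorem eq_zero_of_cauchyMatrix_mulVec_eq_zero {x y : ι → K} (hx : Function.Injective x)
    (hy : Function.Injective y) (hxy : ∀ i k, y k ≠ x i) {w : ι → K}
    (hw : cauchyMatrix x y *ᵥ w = 0) : w = 0 := by
  classical
  set r : ι → K := fun i => w i / nodalWeight univ x i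
  have hwr : ∀ i, nodalWeight univ x i * r i = w i := fun i =>
    mul_div_cancel₀ _ (nodalWeight_ne_zero hx.injOn (mem_univ i))
  have hP_eval : ∀ k, (interpolate univ x r).eval (y k) = 0 := fun k => by
    have hsum : ∑ i, nodalWeight univ x i * (y k - x i)⁻¹ * r i = (cauchyMatrix x y *ᵥ w) k :=
      sum_congr rfl fun i _ => by rw [mul_right_comm, hwr, mul_comm]; rfl
    rw [eval_interpolate_not_at_node r fun i _ => hxy i k, hsum, hw, Pi.zero_apply, mul_zero]
  have hP : interpolate univ x r = 0 :=
    eq_zero_of_degree_lt_of_eval_index_eq_zero univ hy.injOn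
      (degree_interpolate_lt _ hx.injOn) fun k _ => hP_eval k
  funext i
  rw [← hwr, ← eval_interpolate_at_node r hx.injOn (mem_univ i), hP, eval_zero, mul_zero,
    Pi.zero_apply]

end Cauchy

/-- If `⟨B_k z, z⟩ = 0` for all `k` (with `B_k = Λ_k b bᵀ Λ_k` as in the setup,
`λ₁ < ... < λ_N < γ₁ < ... < γ_N`, all `b i ≠ 0`), then `z = 0`. -/
theorem Bk_quadratic_forms_vanish_imp_zero (N : ℕ) (lam gam : Fin N → ℝ) (b : Fin N → ℝ)
    (hlam : StrictMono lam) (hgam : StrictMono gam)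
    (hsep : ∀ i k : Fin N, lam i < gam k)
    (hb : ∀ i, b i ≠ 0)
    (z : Fin N → ℝ)
    (hz : ∀ k : Fin N,
      dotProduct
        (((Matrix.diagonal fun i => 1 / (gam k - lam i)) * Matrix.vecMulVec b b *
          (Matrix.diagonal fun i => 1 / (gam k - lam i))) *ᵥ z) z = 0) :
    z = 0 := by
  have hcauchy : cauchyMatrix lam gam *ᵥ (b * z) = 0 := funext fun k => by
    have hk := hz k
    rw [diagonal_mul_vecMulVec_mul_diagonal, vecMulVec_mulVec_dotProduct, mul_comm b,
      mul_self_eq_zero] at hk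
    rw [Pi.zero_apply, ← hk]
    simp only [cauchyMatrix, mulVec, dotProduct, of_apply, Pi.mul_apply, one_div, mul_assoc]
  have hbz := eq_zero_of_cauchyMatrix_mulVec_eq_zero hlam.injective hgam.injective
    (fun i k => (hsep i k).ne') hcauchy
  funext i
  simpa [hb i] using congrFun hbz i
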